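/- Let g : ℝ² → ℂ be a smooth function which is even in its first variable (g(−s,t) = g(s,t) for all (s,t)), satisfies g(0,0) = 1, satisfies the functional equation (1/2)·g_{ss}(s,t) − (1/2)·g_t(s,t) − (1/2)·g(s,t) = g(−s,−t) for all (s,t), and satisfies the two partial differential equations g_{ssss} − 6·g_{ss} + 3·g_{tt} + 9·g = 0 and g_{ssst} − 6·g_{st} = 0 identically on ℝ². Then there exist complex constants h₁, h₂ with h₁ + h₂ = 1 such that g(s,t) = h₁·cosh(√3·s) + h₂·(cos(√3·t) − √3·sin(√3·t)) for all (s,t) ∈ ℝ² (equivalently, g(s,t) = h₁·cosh(√3·s) − 2h₂·cos(−2π/3 + √3·t)). -/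

import Mathlib

open Complex Function

lemma hasDerivAt_cexp_real (a : ℂ) (x : ℝ) :
    HasDerivAt (fun y : ℝ => Complex.exp (a * y)) (a * Complex.exp (a * x)) x := by
  have h : HasDerivAt (fun z : ℂ => Complex.exp (a * z)) (a * Complex.exp (a * x)) (x : ℂ) := by
    exact (((hasDerivAt_id (x:ℂ)).const_mul a).cexp).congr_deriv (by rw [id, mul_one, mul_comm])
  exact h.comp_ofReal

lemma hasDerivAt_cexp_real_neg (a : ℂ) (x : ℝ) :
    HasDerivAt (fun y : ℝ => Complex.exp (-(a * y))) (-a * Complex.exp (-(a * x))) x := by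
  simpa [neg_mul] using hasDerivAt_cexp_real (-a) x

lemma eq_of_deriv_eq {f h : ℝ → ℂ} {d : ℝ → ℂ}
    (hf : ∀ x, HasDerivAt f (d x) x) (hh : ∀ x, HasDerivAt h (d x) x)
    (h0 : f 0 = h 0) : ∀ x, f x = h x := by
  intro x
  have key := is_const_of_deriv_eq_zero (f := f - h) (𝕜 := ℝ)
    (fun z => ((hf z).sub (hh z)).differentiableAt)
    (fun z => ((hf z).sub (hh z)).deriv.trans (sub_self _)) x 0
  simp only [Pi.sub_apply, h0] at key
  have := sub_eq_sub_iff_sub_eq_sub.mp key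
  simpa [sub_eq_zero] using key

/-- Solution of f' = a f. -/
lemma ode_first {f : ℝ → ℂ} {a : ℂ}
    (hf : ∀ x, HasDerivAt f (a * f x) x) :
    ∀ x, f x = f 0 * Complex.exp (a * x) := by
  have key : ∀ x, f x * Complex.exp (-a * x) = f 0 := by
    intro x
    have h := eq_of_deriv_eq (f := fun x : ℝ => f x * Complex.exp (-a * x))
      (h := fun _ : ℝ => f 0) (d := fun _ => 0) ?_ (fun x => hasDerivAt_const x _) ?_ x
    · exact h
    · intro y
      have := (hf y).mul (hasDerivAt_cexp_real (-a) y)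
      refine this.congr_deriv ?_
      ring
    · simp
  intro x
  have := key x
  have hne : Complex.exp (-a * x) ≠ 0 := Complex.exp_ne_zero _
  field_simp at this ⊢
  rw [← this, mul_assoc, ← Complex.exp_add]
  simp [← Complex.exp_add]

/-- Second-order ODE f'' = k² f: explicit exponential solution. -/
lemma ode_second {f f' : ℝ → ℂ} {k : ℂ} (hk : k ≠ 0)
    (hf : ∀ x, HasDerivAt f (f' x) x)
    (hf' : ∀ x, HasDerivAt f' (k ^ 2 * f x) x) :
    ∃ P Q : ℂ, f 0 = P + Q ∧ f' 0 = k * P - k * Q ∧ ∀ x : ℝ,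
      f x = P * Complex.exp (k * x) + Q * Complex.exp (-(k * x))
      ∧ f' x = k * P * Complex.exp (k * x) - k * Q * Complex.exp (-(k * x)) := by
  have hp : ∀ x, f' x + k * f x = (f' 0 + k * f 0) * Complex.exp (k * x) := by
    intro x
    have := ode_first (f := fun x => f' x + k * f x) (a := k) (fun x => by
      have := (hf' x).add ((hf x).const_mul k)
      exact this.congr_deriv (by ring)) x
    simpa using this
  have hq : ∀ x, f' x - k * f x = (f' 0 - k * f 0) * Complex.exp (-(k * x)) := by
    intro x
    have := ode_first (f := fun x => f' x - k * f x) (a := -k) (fun x => by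
      have := (hf' x).sub ((hf x).const_mul k)
      exact this.congr_deriv (by ring)) x
    simpa [neg_mul] using this
  refine ⟨(f' 0 + k * f 0) / (2 * k), (k * f 0 - f' 0) / (2 * k), by field_simp; ring,
    by field_simp; ring, fun x => ?_⟩
  have h1 := hp x; have h2 := hq x
  have h2k : (2 : ℂ) * k ≠ 0 := by simp [hk]
  constructor
  · apply mul_left_cancel₀ h2k
    have : (2 * k) * ((f' 0 + k * f 0) / (2 * k) * Complex.exp (k * x)
        + (k * f 0 - f' 0) / (2 * k) * Complex.exp (-(k * x)))
        = (f' 0 + k * f 0) * Complex.exp (k * x)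
          - (f' 0 - k * f 0) * Complex.exp (-(k * x)) := by
      field_simp; ring
    rw [this]; linear_combination h1 - h2
  · apply mul_left_cancel₀ (two_ne_zero (α := ℂ))
    have : (2 : ℂ) * (k * ((f' 0 + k * f 0) / (2 * k)) * Complex.exp (k * x)
        - k * ((k * f 0 - f' 0) / (2 * k)) * Complex.exp (-(k * x)))
        = (f' 0 + k * f 0) * Complex.exp (k * x)
          + (f' 0 - k * f 0) * Complex.exp (-(k * x)) := by
      field_simp; ring
    rw [this]; linear_combination h1 + h2

/-- Partial derivative with respect to the first variable of a complex-valued function of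
two real variables. -/
noncomputable def pdS (g : ℝ → ℝ → ℂ) (s t : ℝ) : ℂ := deriv (fun u => g u t) s
/-- Partial derivative with respect to the second variable of a complex-valued function of
two real variables. -/
noncomputable def pdT (g : ℝ → ℝ → ℂ) (s t : ℝ) : ℂ := deriv (fun u => g s u) t

section PD
variable {F : ℝ → ℝ → ℂ} (hF : ContDiff ℝ (⊤ : ℕ∞) (Function.uncurry F))

lemma hasDerivAt_inl (t : ℝ) (s : ℝ) :
    HasDerivAt (fun u : ℝ => ((u, t) : ℝ × ℝ)) (1, 0) s :=
  (hasDerivAt_id s).prodMk (hasDerivAt_const s t)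

lemma hasDerivAt_inr (s : ℝ) (t : ℝ) :
    HasDerivAt (fun u : ℝ => ((s, u) : ℝ × ℝ)) (0, 1) t :=
  (hasDerivAt_const t s).prodMk (hasDerivAt_id t)

include hF

lemma pdS_hasDeriv (s t : ℝ) : HasDerivAt (fun u => F u t) (pdS F s t) s := by
  have h1 : DifferentiableAt ℝ (Function.uncurry F) (s, t) :=
    (hF.differentiable (by simp)) _
  have h2 : DifferentiableAt ℝ (fun u : ℝ => F u t) s :=
    (h1.comp s (hasDerivAt_inl t s).differentiableAt :)
  exact h2.hasDerivAt

lemma pdT_hasDeriv (s t : ℝ) : HasDerivAt (fun u => F s u) (pdT F s t) t := by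
  have h1 : DifferentiableAt ℝ (Function.uncurry F) (s, t) :=
    (hF.differentiable (by simp)) _
  have h2 : DifferentiableAt ℝ (fun u : ℝ => F s u) t :=
    h1.comp t (hasDerivAt_inr s t).differentiableAt
  exact h2.hasDerivAt

lemma pdS_eq_fderiv (s t : ℝ) :
    pdS F s t = fderiv ℝ (Function.uncurry F) (s, t) (1, 0) := by
  have h1 : HasFDerivAt (Function.uncurry F) (fderiv ℝ (Function.uncurry F) (s, t)) (s, t) :=
    ((hF.differentiable (by simp)) _).hasFDerivAt
  have h2 : HasDerivAt (fun u => F u t) (fderiv ℝ (Function.uncurry F) (s, t) (1, 0)) s :=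
    (h1.comp_hasDerivAt s (hasDerivAt_inl t s) :)
  exact h2.deriv

lemma pdT_eq_fderiv (s t : ℝ) :
    pdT F s t = fderiv ℝ (Function.uncurry F) (s, t) (0, 1) := by
  have h1 : HasFDerivAt (Function.uncurry F) (fderiv ℝ (Function.uncurry F) (s, t)) (s, t) :=
    ((hF.differentiable (by simp)) _).hasFDerivAt
  have h2 : HasDerivAt (fun u => F s u) (fderiv ℝ (Function.uncurry F) (s, t) (0, 1)) t :=
    h1.comp_hasDerivAt t (hasDerivAt_inr s t)
  exact h2.deriv

lemma contDiff_pdS : ContDiff ℝ (⊤ : ℕ∞) (Function.uncurry (pdS F)) := by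
  have h : Function.uncurry (pdS F)
      = fun p : ℝ × ℝ => fderiv ℝ (Function.uncurry F) p ((1 : ℝ), (0 : ℝ)) := by
    funext p
    exact pdS_eq_fderiv hF p.1 p.2
  rw [h]
  exact (hF.fderiv_right (by simp)).clm_apply contDiff_const

lemma contDiff_pdT : ContDiff ℝ (⊤ : ℕ∞) (Function.uncurry (pdT F)) := by
  have h : Function.uncurry (pdT F)
      = fun p : ℝ × ℝ => fderiv ℝ (Function.uncurry F) p ((0 : ℝ), (1 : ℝ)) := by
    funext p
    exact pdT_eq_fderiv hF p.1 p.2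
  rw [h]
  exact (hF.fderiv_right (by simp)).clm_apply contDiff_const

/-- Clairaut: mixed partials commute. -/
lemma pd_comm (s t : ℝ) : pdT (pdS F) s t = pdS (pdT F) s t := by
  set f := Function.uncurry F with hf
  have hdiff : Differentiable ℝ f := hF.differentiable (by simp)
  have hfd : ContDiff ℝ (⊤ : ℕ∞) (fderiv ℝ f) := hF.fderiv_right (by simp)
  have hfd2 : HasFDerivAt (fderiv ℝ f) (fderiv ℝ (fderiv ℝ f) (s, t)) (s, t) :=
    ((hfd.differentiable (by simp)) _).hasFDerivAt
  have symm := second_derivative_symmetric (f := f)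
    (fun y => (hdiff y).hasFDerivAt) hfd2
  -- pdT (pdS F) s t = f'' (0,1) (1,0)
  have h1 : pdT (pdS F) s t = fderiv ℝ (fderiv ℝ f) (s, t) (0, 1) (1, 0) := by
    have hc : HasDerivAt (fun u : ℝ => fderiv ℝ f (s, u))
        (fderiv ℝ (fderiv ℝ f) (s, t) (0, 1)) t :=
      hfd2.comp_hasDerivAt t (hasDerivAt_inr s t)
    have happ : HasDerivAt (fun u : ℝ => fderiv ℝ f (s, u) ((1 : ℝ), (0 : ℝ)))
        (fderiv ℝ (fderiv ℝ f) (s, t) (0, 1) ((1 : ℝ), (0 : ℝ))) t :=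
      ((ContinuousLinearMap.apply ℝ ℂ ((1 : ℝ), (0 : ℝ))).hasFDerivAt.comp_hasDerivAt t hc)
    have heqfun : (fun u : ℝ => pdS F s u)
        = fun u : ℝ => fderiv ℝ f (s, u) ((1 : ℝ), (0 : ℝ)) := by
      funext u; exact pdS_eq_fderiv hF s u
    show deriv (fun u => pdS F s u) t = _
    rw [heqfun]
    exact happ.deriv
  have h2 : pdS (pdT F) s t = fderiv ℝ (fderiv ℝ f) (s, t) (1, 0) (0, 1) := by
    have hc : HasDerivAt (fun u : ℝ => fderiv ℝ f (u, t))
        (fderiv ℝ (fderiv ℝ f) (s, t) (1, 0)) s :=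
      hfd2.comp_hasDerivAt s (hasDerivAt_inl t s)
    have happ : HasDerivAt (fun u : ℝ => fderiv ℝ f (u, t) ((0 : ℝ), (1 : ℝ)))
        (fderiv ℝ (fderiv ℝ f) (s, t) (1, 0) ((0 : ℝ), (1 : ℝ))) s :=
      ((ContinuousLinearMap.apply ℝ ℂ ((0 : ℝ), (1 : ℝ))).hasFDerivAt.comp_hasDerivAt s hc)
    have heqfun : (fun u : ℝ => pdT F u t)
        = fun u : ℝ => fderiv ℝ f (u, t) ((0 : ℝ), (1 : ℝ)) := by
      funext u; exact pdT_eq_fderiv hF u t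
    show deriv (fun u => pdT F u t) s = _
    rw [heqfun]
    exact happ.deriv
  rw [h1, h2, symm]

end PD

section Even
variable {F : ℝ → ℝ → ℂ} (hF : ContDiff ℝ (⊤ : ℕ∞) (Function.uncurry F))
include hF

lemma pdS_even (h : ∀ s t : ℝ, F (-s) t = F s t) :
    ∀ s t : ℝ, pdS F (-s) t = -pdS F s t := by
  intro s t
  have h1 : HasDerivAt (fun u : ℝ => F (-u) t) (pdS F (-s) t * (-1)) s := by
    have := HasDerivAt.scomp_of_eq (x := s) (h := fun u : ℝ => -u)
      (pdS_hasDeriv hF (-s) t) (hasDerivAt_neg' s) rfl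
    simp only [Function.comp_def] at this
    refine this.congr_deriv ?_
    simp [mul_comm]
  have hfe : (fun u : ℝ => F (-u) t) = fun u : ℝ => F u t := funext fun u => h u t
  rw [hfe] at h1
  have := h1.unique (pdS_hasDeriv hF s t)
  linear_combination -this

lemma pdS_odd (h : ∀ s t : ℝ, F (-s) t = -F s t) :
    ∀ s t : ℝ, pdS F (-s) t = pdS F s t := by
  intro s t
  have h1 : HasDerivAt (fun u : ℝ => F (-u) t) (pdS F (-s) t * (-1)) s := by
    have := HasDerivAt.scomp_of_eq (x := s) (h := fun u : ℝ => -u)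
      (pdS_hasDeriv hF (-s) t) (hasDerivAt_neg' s) rfl
    simp only [Function.comp_def] at this
    refine this.congr_deriv ?_
    simp [mul_comm]
  have hfe : (fun u : ℝ => F (-u) t) = fun u : ℝ => -F u t := funext fun u => h u t
  rw [hfe] at h1
  have := h1.unique (pdS_hasDeriv hF s t).neg
  linear_combination -this

end Even

section Neg
variable {F : ℝ → ℝ → ℂ} (hF : ContDiff ℝ (⊤ : ℕ∞) (Function.uncurry F))
include hF

lemma hasDerivAt_negS (s t : ℝ) :
    HasDerivAt (fun u : ℝ => F (-u) t) (-pdS F (-s) t) s := by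
  have := HasDerivAt.scomp_of_eq (x := s) (h := fun u : ℝ => -u)
    (pdS_hasDeriv hF (-s) t) (hasDerivAt_neg' s) rfl
  simp only [Function.comp_def] at this
  refine this.congr_deriv ?_
  simp [mul_comm]

lemma hasDerivAt_negT (s t : ℝ) :
    HasDerivAt (fun u : ℝ => F s (-u)) (-pdT F s (-t)) t := by
  have := HasDerivAt.scomp_of_eq (x := t) (h := fun u : ℝ => -u)
    (pdT_hasDeriv hF s (-t)) (hasDerivAt_neg' t) rfl
  simp only [Function.comp_def] at this
  refine this.congr_deriv ?_
  simp [mul_comm]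

end Neg

/-- If a smooth `g : ℝ² → ℂ` is even in its first variable, satisfies
`g(0,0) = 1`, the functional equation `(1/2)·g_{ss} − (1/2)·g_t − (1/2)·g = g∘τ`
(`τ(s,t) = (−s,−t)`), and the two PDEs `g_{ssss} − 6g_{ss} + 3g_{tt} + 9g = 0` and
`g_{ssst} − 6g_{st} = 0`, then there are complex constants `h₁, h₂` with `h₁ + h₂ = 1` and
`g(s,t) = h₁·cosh(√3·s) + h₂·(cos(√3·t) − √3·sin(√3·t))`. -/
theorem stmt8 (g : ℝ → ℝ → ℂ)
    (hg : ContDiff ℝ (⊤ : ℕ∞) (Function.uncurry g))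
    (heven : ∀ s t : ℝ, g (-s) t = g s t)
    (h00 : g 0 0 = 1)
    (heq : ∀ s t : ℝ,
      (1 / 2) * pdS (pdS g) s t - (1 / 2) * pdT g s t - (1 / 2) * g s t = g (-s) (-t))
    (hpde2 : ∀ s t : ℝ,
      pdS (pdS (pdS (pdS g))) s t - 6 * pdS (pdS g) s t + 3 * pdT (pdT g) s t + 9 * g s t = 0)
    (hpde3 : ∀ s t : ℝ,
      pdT (pdS (pdS (pdS g))) s t - 6 * pdT (pdS g) s t = 0) :
    ∃ h₁ h₂ : ℂ, h₁ + h₂ = 1 ∧ ∀ s t : ℝ,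
      g s t = h₁ * Complex.cosh ((Real.sqrt 3 * s : ℝ) : ℂ)
        + h₂ * (Complex.cos ((Real.sqrt 3 * t : ℝ) : ℂ)
          - (Real.sqrt 3 : ℂ) * Complex.sin ((Real.sqrt 3 * t : ℝ) : ℂ)) := by
  have hgA : ContDiff ℝ (⊤ : ℕ∞) (Function.uncurry (pdS g)) := contDiff_pdS hg
  have hgB : ContDiff ℝ (⊤ : ℕ∞) (Function.uncurry (pdS (pdS g))) := contDiff_pdS hgA
  have hgC : ContDiff ℝ (⊤ : ℕ∞) (Function.uncurry (pdS (pdS (pdS g)))) := contDiff_pdS hgB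
  have hgT : ContDiff ℝ (⊤ : ℕ∞) (Function.uncurry (pdT g)) := contDiff_pdT hg
  have hgST : ContDiff ℝ (⊤ : ℕ∞) (Function.uncurry (pdS (pdT g))) := contDiff_pdS hgT
  -- differentiate the functional equation in s
  have I1 : ∀ s t : ℝ, (1/2) * pdS (pdS (pdS g)) s t - (1/2) * pdS (pdT g) s t
      - (1/2) * pdS g s t = -pdS g (-s) (-t) := by
    intro s t
    have hL : HasDerivAt
        (fun u : ℝ => (1/2) * pdS (pdS g) u t - (1/2) * pdT g u t - (1/2) * g u t)
        ((1/2) * pdS (pdS (pdS g)) s t - (1/2) * pdS (pdT g) s t - (1/2) * pdS g s t) s :=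
      (((pdS_hasDeriv hgB s t).const_mul (1/2)).sub
        ((pdS_hasDeriv hgT s t).const_mul (1/2))).sub ((pdS_hasDeriv hg s t).const_mul (1/2))
    have hR := hasDerivAt_negS hg s (-t)
    have hfe : (fun u : ℝ => (1/2) * pdS (pdS g) u t - (1/2) * pdT g u t - (1/2) * g u t)
        = fun u : ℝ => g (-u) (-t) := funext fun u => by
      have := heq u t; linear_combination this
    rw [hfe] at hL
    exact hL.unique hR
  -- differentiate again in s
  have I2 : ∀ s t : ℝ, (1/2) * pdS (pdS (pdS (pdS g))) s t - (1/2) * pdS (pdS (pdT g)) s t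
      - (1/2) * pdS (pdS g) s t = pdS (pdS g) (-s) (-t) := by
    intro s t
    have hL : HasDerivAt
        (fun u : ℝ => (1/2) * pdS (pdS (pdS g)) u t - (1/2) * pdS (pdT g) u t
          - (1/2) * pdS g u t)
        ((1/2) * pdS (pdS (pdS (pdS g))) s t - (1/2) * pdS (pdS (pdT g)) s t
          - (1/2) * pdS (pdS g) s t) s :=
      (((pdS_hasDeriv hgC s t).const_mul (1/2)).sub
        ((pdS_hasDeriv hgST s t).const_mul (1/2))).sub ((pdS_hasDeriv hgA s t).const_mul (1/2))
    have hR := (hasDerivAt_negS hgA s (-t)).neg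
    have hfe : (fun u : ℝ => (1/2) * pdS (pdS (pdS g)) u t - (1/2) * pdS (pdT g) u t
        - (1/2) * pdS g u t) = fun u : ℝ => -pdS g (-u) (-t) := funext fun u => I1 u t
    rw [hfe] at hL
    have := hL.unique hR
    linear_combination this
  -- differentiate the functional equation in t
  have I3 : ∀ s t : ℝ, (1/2) * pdT (pdS (pdS g)) s t - (1/2) * pdT (pdT g) s t
      - (1/2) * pdT g s t = -pdT g (-s) (-t) := by
    intro s t
    have hL : HasDerivAt
        (fun u : ℝ => (1/2) * pdS (pdS g) s u - (1/2) * pdT g s u - (1/2) * g s u)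
        ((1/2) * pdT (pdS (pdS g)) s t - (1/2) * pdT (pdT g) s t - (1/2) * pdT g s t) t :=
      (((pdT_hasDeriv hgB s t).const_mul (1/2)).sub
        ((pdT_hasDeriv hgT s t).const_mul (1/2))).sub ((pdT_hasDeriv hg s t).const_mul (1/2))
    have hR := hasDerivAt_negT hg (-s) t
    have hfe : (fun u : ℝ => (1/2) * pdS (pdS g) s u - (1/2) * pdT g s u - (1/2) * g s u)
        = fun u : ℝ => g (-s) (-u) := funext fun u => heq s u
    rw [hfe] at hL
    exact hL.unique hR
  have comm1 : ∀ s t : ℝ, pdS (pdS (pdT g)) s t = pdT (pdS (pdS g)) s t := by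
    intro s t
    have h1 : pdS (pdT g) = pdT (pdS g) :=
      funext fun a => funext fun b => (pd_comm hg a b).symm
    rw [h1]
    exact (pd_comm hgA s t).symm
  have hA4 : ∀ s t : ℝ, pdS (pdS (pdS (pdS g))) s t
      = 2 * pdS (pdS g) s t + pdT (pdT g) s t + 3 * g s t := by
    intro s t
    have e1 := heq s t
    have e2 := heq (-s) (-t); rw [neg_neg, neg_neg] at e2
    have e3 := I2 s t
    have e4 := I3 s t
    have e5 := comm1 s t
    linear_combination 4*e2 + 2*e3 + 2*e4 - 2*e1 + e5
  have hCc : ∀ s t : ℝ, pdT (pdT g) s t = pdS (pdS g) s t - 3 * g s t := fun s t => by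
    linear_combination (1/4) * hpde2 s t - (1/4) * hA4 s t
  have hD4 : ∀ s t : ℝ, pdS (pdS (pdS (pdS g))) s t = 3 * pdS (pdS g) s t := fun s t => by
    linear_combination hA4 s t + hCc s t
  -- evenness consequences
  have hodd1 := pdS_even hg heven
  have heven2 := pdS_odd hgA hodd1
  have hodd3 := pdS_even hgB heven2
  have hA0 : ∀ t : ℝ, pdS g 0 t = 0 := by
    intro t; have := hodd1 0 t; rw [neg_zero] at this; linear_combination (1/2) * this
  have hC0 : ∀ t : ℝ, pdS (pdS (pdS g)) 0 t = 0 := by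
    intro t; have := hodd3 0 t; rw [neg_zero] at this; linear_combination (1/2) * this
  -- constants
  have hs3 : (0:ℝ) < Real.sqrt 3 := Real.sqrt_pos.mpr (by norm_num)
  have hk0 : ((Real.sqrt 3 : ℝ) : ℂ) ≠ 0 := by
    exact_mod_cast Complex.ofReal_ne_zero.mpr hs3.ne'
  have hk2 : ((Real.sqrt 3 : ℝ) : ℂ) ^ 2 = 3 := by
    norm_cast
    rw [Real.sq_sqrt (by norm_num : (0:ℝ) ≤ 3)]
  -- solve the ODE in s at fixed t
  have hBC : ∀ t s : ℝ,
      pdS (pdS g) s t = pdS (pdS g) 0 t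
        * ((Complex.exp ((Real.sqrt 3 : ℂ) * s) + Complex.exp (-((Real.sqrt 3 : ℂ) * s))) / 2)
      ∧ pdS (pdS (pdS g)) s t = pdS (pdS g) 0 t
        * ((Real.sqrt 3 : ℂ)
          * (Complex.exp ((Real.sqrt 3 : ℂ) * s) - Complex.exp (-((Real.sqrt 3 : ℂ) * s))) / 2) := by
    intro t
    obtain ⟨P, Q, h0, h0', hform⟩ := ode_second (k := ((Real.sqrt 3 : ℝ) : ℂ)) hk0
      (f := fun s => pdS (pdS g) s t) (f' := fun s => pdS (pdS (pdS g)) s t)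
      (fun s => pdS_hasDeriv hgB s t)
      (fun s => by
        have h := pdS_hasDeriv hgC s t
        have he : pdS (pdS (pdS (pdS g))) s t
            = ((Real.sqrt 3 : ℝ) : ℂ) ^ 2 * pdS (pdS g) s t := by
          rw [hk2]; exact hD4 s t
        rwa [he] at h)
    rw [hC0 t] at h0'
    have hPQ : P = Q := by
      have h' : ((Real.sqrt 3 : ℝ) : ℂ) * (P - Q) = 0 := by linear_combination -h0'
      rcases mul_eq_zero.mp h' with h'' | h''
      · exact absurd h'' hk0
      · exact sub_eq_zero.mp h''
    intro s
    obtain ⟨hf, hf'⟩ := hform s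
    constructor
    · rw [hf, h0]
      linear_combination ((Complex.exp ((Real.sqrt 3 : ℂ) * s)
        - Complex.exp (-((Real.sqrt 3 : ℂ) * s))) / 2) * hPQ
    · rw [hf', h0]
      linear_combination (((Real.sqrt 3 : ℂ)) * (Complex.exp (-((Real.sqrt 3 : ℂ) * s))
        + Complex.exp ((Real.sqrt 3 : ℂ) * s)) / 2) * hPQ
  -- integrate once: formula for pdS g
  have hAform : ∀ s t : ℝ, pdS g s t = pdS (pdS g) 0 t
      * ((Complex.exp ((Real.sqrt 3 : ℂ) * s) - Complex.exp (-((Real.sqrt 3 : ℂ) * s)))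
        / (2 * (Real.sqrt 3 : ℂ))) := by
    intro s t
    have hcand : ∀ s : ℝ, HasDerivAt (fun s : ℝ => pdS (pdS g) 0 t
        * ((Complex.exp ((Real.sqrt 3 : ℂ) * s) - Complex.exp (-((Real.sqrt 3 : ℂ) * s)))
          / (2 * (Real.sqrt 3 : ℂ)))) (pdS (pdS g) s t) s := fun s => ?_
    case _ =>
      exact eq_of_deriv_eq (d := fun s => pdS (pdS g) s t)
        (fun s => pdS_hasDeriv hgA s t) hcand (by simp [hA0 t]) s
    have hd := (((hasDerivAt_cexp_real ((Real.sqrt 3 : ℝ) : ℂ) s).sub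
      (hasDerivAt_cexp_real_neg ((Real.sqrt 3 : ℝ) : ℂ) s)).div_const
        (2 * (Real.sqrt 3 : ℂ))).const_mul (pdS (pdS g) 0 t)
    have he : pdS (pdS g) 0 t
        * (((Real.sqrt 3 : ℂ) * Complex.exp ((Real.sqrt 3 : ℂ) * s)
          - -(Real.sqrt 3 : ℂ) * Complex.exp (-((Real.sqrt 3 : ℂ) * s)))
            / (2 * (Real.sqrt 3 : ℂ)))
        = pdS (pdS g) s t := by
      rw [(hBC t s).1]
      field_simp
      ring
    rwa [he] at hd
  -- integrate twice: formula for g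
  have hEg : ∀ s t : ℝ, g s t = (g 0 t - pdS (pdS g) 0 t / 3)
      + (pdS (pdS g) 0 t / 3)
        * ((Complex.exp ((Real.sqrt 3 : ℂ) * s) + Complex.exp (-((Real.sqrt 3 : ℂ) * s))) / 2) := by
    intro s t
    have hcand : ∀ s : ℝ, HasDerivAt (fun s : ℝ => (g 0 t - pdS (pdS g) 0 t / 3)
        + (pdS (pdS g) 0 t / 3)
          * ((Complex.exp ((Real.sqrt 3 : ℂ) * s) + Complex.exp (-((Real.sqrt 3 : ℂ) * s))) / 2))
        (pdS g s t) s := fun s => ?_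
    case _ =>
      refine eq_of_deriv_eq (d := fun s => pdS g s t)
        (fun s => pdS_hasDeriv hg s t) hcand ?_ s
      simp [Complex.exp_zero]
    have hd := ((((hasDerivAt_cexp_real ((Real.sqrt 3 : ℝ) : ℂ) s).add
      (hasDerivAt_cexp_real_neg ((Real.sqrt 3 : ℝ) : ℂ) s)).div_const 2).const_mul
        (pdS (pdS g) 0 t / 3)).const_add (g 0 t - pdS (pdS g) 0 t / 3)
    have he : pdS (pdS g) 0 t / 3
        * (((Real.sqrt 3 : ℂ) * Complex.exp ((Real.sqrt 3 : ℂ) * s)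
          + -(Real.sqrt 3 : ℂ) * Complex.exp (-((Real.sqrt 3 : ℂ) * s))) / 2)
        = pdS g s t := by
      rw [hAform s t]
      field_simp
      linear_combination (pdS (pdS g) 0 t * (Complex.exp ((Real.sqrt 3 : ℂ) * s)
        - Complex.exp (-((Real.sqrt 3 : ℂ) * s)))) * hk2
    rwa [he] at hd
  -- t-derivatives of the explicit formulas
  have hTS : ∀ s t : ℝ, pdT (pdS g) s t = pdT (pdS (pdS g)) 0 t
      * ((Complex.exp ((Real.sqrt 3 : ℂ) * s) - Complex.exp (-((Real.sqrt 3 : ℂ) * s)))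
        / (2 * (Real.sqrt 3 : ℂ))) := by
    intro s t
    have hL := pdT_hasDeriv hgA s t
    have hfe : (fun u : ℝ => pdS g s u) = fun u : ℝ => pdS (pdS g) 0 u
        * ((Complex.exp ((Real.sqrt 3 : ℂ) * s) - Complex.exp (-((Real.sqrt 3 : ℂ) * s)))
          / (2 * (Real.sqrt 3 : ℂ))) := funext fun u => hAform s u
    rw [hfe] at hL
    have hR := (pdT_hasDeriv hgB 0 t).mul_const
      ((Complex.exp ((Real.sqrt 3 : ℂ) * s) - Complex.exp (-((Real.sqrt 3 : ℂ) * s)))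
        / (2 * (Real.sqrt 3 : ℂ)))
    exact hL.unique hR
  have hTSSS : ∀ s t : ℝ, pdT (pdS (pdS (pdS g))) s t = pdT (pdS (pdS g)) 0 t
      * ((Real.sqrt 3 : ℂ)
        * (Complex.exp ((Real.sqrt 3 : ℂ) * s) - Complex.exp (-((Real.sqrt 3 : ℂ) * s))) / 2) := by
    intro s t
    have hL := pdT_hasDeriv hgC s t
    have hfe : (fun u : ℝ => pdS (pdS (pdS g)) s u) = fun u : ℝ => pdS (pdS g) 0 u
        * ((Real.sqrt 3 : ℂ)
          * (Complex.exp ((Real.sqrt 3 : ℂ) * s) - Complex.exp (-((Real.sqrt 3 : ℂ) * s))) / 2) :=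
      funext fun u => (hBC u s).2
    rw [hfe] at hL
    have hR := (pdT_hasDeriv hgB 0 t).mul_const
      ((Real.sqrt 3 : ℂ)
        * (Complex.exp ((Real.sqrt 3 : ℂ) * s) - Complex.exp (-((Real.sqrt 3 : ℂ) * s))) / 2)
    exact hL.unique hR
  -- pde3 forces the second s-derivative at s = 0 to be constant in t
  have hbconst : ∀ t : ℝ, pdS (pdS g) 0 t = pdS (pdS g) 0 0 := by
    have hb' : ∀ t : ℝ, pdT (pdS (pdS g)) 0 t = 0 := by
      intro t
      have h := hpde3 1 t
      rw [hTS 1 t, hTSSS 1 t] at h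
      have hX : Complex.exp ((Real.sqrt 3 : ℝ) : ℂ)
          - Complex.exp (-((Real.sqrt 3 : ℝ) : ℂ)) ≠ 0 := by
        rw [sub_ne_zero]
        rw [show -((Real.sqrt 3 : ℝ) : ℂ) = ((-(Real.sqrt 3) : ℝ) : ℂ) by push_cast; ring]
        rw [← Complex.ofReal_exp, ← Complex.ofReal_exp]
        intro hcontra
        have := Real.exp_injective (by exact_mod_cast hcontra)
        linarith
      field_simp at h
      have h4 : (pdT (pdS (pdS g)) 0 t
          * (Complex.exp ((Real.sqrt 3 : ℝ) : ℂ) - Complex.exp (-((Real.sqrt 3 : ℝ) : ℂ))))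
            * (-6) = 0 := by
        simp only [Complex.ofReal_one, mul_one] at h
        linear_combination 2 * h - (2 * (pdT (pdS (pdS g)) 0 t
          * (Complex.exp ((Real.sqrt 3 : ℝ) : ℂ) - Complex.exp (-((Real.sqrt 3 : ℝ) : ℂ))))) * hk2
      rcases mul_eq_zero.mp h4 with h5 | h5
      · rcases mul_eq_zero.mp h5 with h6 | h6
        · exact h6
        · exact absurd h6 hX
      · norm_num at h5
    intro t
    refine eq_of_deriv_eq (f := fun t => pdS (pdS g) 0 t) (h := fun _ => pdS (pdS g) 0 0)
      (d := fun _ => 0) (fun u => ?_) (fun u => hasDerivAt_const u _) rfl t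
    have := pdT_hasDeriv hgB 0 u
    rwa [hb' u] at this
  -- the ODE in t
  have hκ0 : ((Real.sqrt 3 : ℝ) : ℂ) * Complex.I ≠ 0 := mul_ne_zero hk0 Complex.I_ne_zero
  have hκ2 : (((Real.sqrt 3 : ℝ) : ℂ) * Complex.I) ^ 2 = -3 := by
    rw [mul_pow, hk2, Complex.I_sq]; ring
  have hcd : ∀ t : ℝ, HasDerivAt (fun t : ℝ => g 0 t - pdS (pdS g) 0 0 / 3) (pdT g 0 t) t :=
    fun t => (pdT_hasDeriv hg 0 t).sub_const _
  have hcd2 : ∀ t : ℝ, HasDerivAt (fun t : ℝ => pdT g 0 t)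
      ((((Real.sqrt 3 : ℝ) : ℂ) * Complex.I) ^ 2 * (g 0 t - pdS (pdS g) 0 0 / 3)) t := by
    intro t
    have h := pdT_hasDeriv hgT 0 t
    have he : pdT (pdT g) 0 t
        = (((Real.sqrt 3 : ℝ) : ℂ) * Complex.I) ^ 2 * (g 0 t - pdS (pdS g) 0 0 / 3) := by
      rw [hκ2]
      linear_combination hCc 0 t + hbconst t
    rwa [he] at h
  obtain ⟨P, Q, hc0, hc0', hcform⟩ := ode_second hκ0 hcd hcd2
  have hc0' : g 0 0 - pdS (pdS g) 0 0 / 3 = P + Q := hc0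
  -- the functional equation at s = 0
  have hFE : ∀ t : ℝ,
      P * Complex.exp (-((((Real.sqrt 3 : ℝ) : ℂ) * Complex.I) * t))
        + Q * Complex.exp ((((Real.sqrt 3 : ℝ) : ℂ) * Complex.I) * t)
      = -(1/2) * ((P * Complex.exp ((((Real.sqrt 3 : ℝ) : ℂ) * Complex.I) * t)
            + Q * Complex.exp (-((((Real.sqrt 3 : ℝ) : ℂ) * Complex.I) * t)))
          + ((((Real.sqrt 3 : ℝ) : ℂ) * Complex.I) * P
              * Complex.exp ((((Real.sqrt 3 : ℝ) : ℂ) * Complex.I) * t)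
            - (((Real.sqrt 3 : ℝ) : ℂ) * Complex.I) * Q
              * Complex.exp (-((((Real.sqrt 3 : ℝ) : ℂ) * Complex.I) * t)))) := by
    intro t
    have e := heq 0 t
    rw [neg_zero] at e
    have h1 : g 0 t - pdS (pdS g) 0 0 / 3
        = P * Complex.exp ((((Real.sqrt 3 : ℝ) : ℂ) * Complex.I) * t)
          + Q * Complex.exp (-((((Real.sqrt 3 : ℝ) : ℂ) * Complex.I) * t)) := (hcform t).1
    have h2 := (hcform t).2
    have h3 : g 0 (-t) - pdS (pdS g) 0 0 / 3
        = P * Complex.exp ((((Real.sqrt 3 : ℝ) : ℂ) * Complex.I) * ((-t : ℝ) : ℂ))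
          + Q * Complex.exp (-((((Real.sqrt 3 : ℝ) : ℂ) * Complex.I) * ((-t : ℝ) : ℂ))) :=
      (hcform (-t)).1
    rw [show ((-t : ℝ) : ℂ) = -(t : ℂ) by push_cast; ring, mul_neg, neg_neg] at h3
    linear_combination -h3 - e - (1/2) * h1 - (1/2) * h2 + (1/2) * hbconst t
  -- evaluate at t₀ = π / (2√3)
  have harg : (((Real.sqrt 3 : ℝ) : ℂ) * Complex.I) * ((Real.pi / (2 * Real.sqrt 3) : ℝ) : ℂ)
      = ((Real.pi / 2 : ℝ) : ℂ) * Complex.I := by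
    push_cast
    have : ((Real.sqrt 3 : ℝ) : ℂ) ≠ 0 := hk0
    field_simp
  have hexpI : Complex.exp ((((Real.sqrt 3 : ℝ) : ℂ) * Complex.I)
      * ((Real.pi / (2 * Real.sqrt 3) : ℝ) : ℂ)) = Complex.I := by
    rw [harg, Complex.exp_mul_I, ← Complex.ofReal_cos, ← Complex.ofReal_sin,
      Real.cos_pi_div_two, Real.sin_pi_div_two]
    simp
  have hexpmI : Complex.exp (-((((Real.sqrt 3 : ℝ) : ℂ) * Complex.I)
      * ((Real.pi / (2 * Real.sqrt 3) : ℝ) : ℂ))) = -Complex.I := by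
    rw [Complex.exp_neg, hexpI, Complex.inv_I]
  have Eq1 := hFE (Real.pi / (2 * Real.sqrt 3))
  rw [hexpI, hexpmI] at Eq1
  have hP : P = (1 + ((Real.sqrt 3 : ℝ) : ℂ) * Complex.I) * (P + Q) / 2 := by
    linear_combination Complex.I * Eq1
      + (((P - Q) - (((Real.sqrt 3 : ℝ) : ℂ) * Complex.I) * (P + Q)) / 2) * Complex.I_sq
  have hQ : Q = (1 - ((Real.sqrt 3 : ℝ) : ℂ) * Complex.I) * (P + Q) / 2 := by
    linear_combination (-Complex.I) * Eq1
      - (((P - Q) - (((Real.sqrt 3 : ℝ) : ℂ) * Complex.I) * (P + Q)) / 2) * Complex.I_sq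
  -- assemble
  refine ⟨pdS (pdS g) 0 0 / 3, P + Q, by linear_combination h00 - hc0', ?_⟩
  intro s t
  have hgf := hEg s t
  rw [hbconst t] at hgf
  have h1 : g 0 t - pdS (pdS g) 0 0 / 3
      = P * Complex.exp ((((Real.sqrt 3 : ℝ) : ℂ) * Complex.I) * t)
        + Q * Complex.exp (-((((Real.sqrt 3 : ℝ) : ℂ) * Complex.I) * t)) := (hcform t).1
  have hcosh : Complex.cosh ((Real.sqrt 3 * s : ℝ) : ℂ)
      = (Complex.exp ((Real.sqrt 3 : ℂ) * s) + Complex.exp (-((Real.sqrt 3 : ℂ) * s))) / 2 := by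
    rw [show ((Real.sqrt 3 * s : ℝ) : ℂ) = (Real.sqrt 3 : ℂ) * s by push_cast; ring]
    rfl
  have hcos : Complex.cos ((Real.sqrt 3 * t : ℝ) : ℂ)
      = (Complex.exp ((((Real.sqrt 3 : ℝ) : ℂ) * Complex.I) * t)
        + Complex.exp (-((((Real.sqrt 3 : ℝ) : ℂ) * Complex.I) * t))) / 2 := by
    show (Complex.exp (((Real.sqrt 3 * t : ℝ) : ℂ) * Complex.I)
      + Complex.exp (-((Real.sqrt 3 * t : ℝ) : ℂ) * Complex.I)) / 2 = _
    rw [show ((Real.sqrt 3 * t : ℝ) : ℂ) * Complex.I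
          = (((Real.sqrt 3 : ℝ) : ℂ) * Complex.I) * t by push_cast; ring,
        show -((Real.sqrt 3 * t : ℝ) : ℂ) * Complex.I
          = -((((Real.sqrt 3 : ℝ) : ℂ) * Complex.I) * t) by push_cast; ring]
  have hsin : Complex.sin ((Real.sqrt 3 * t : ℝ) : ℂ)
      = (Complex.exp (-((((Real.sqrt 3 : ℝ) : ℂ) * Complex.I) * t))
        - Complex.exp ((((Real.sqrt 3 : ℝ) : ℂ) * Complex.I) * t)) * Complex.I / 2 := by
    show (Complex.exp (-((Real.sqrt 3 * t : ℝ) : ℂ) * Complex.I)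
      - Complex.exp (((Real.sqrt 3 * t : ℝ) : ℂ) * Complex.I)) * Complex.I / 2 = _
    rw [show ((Real.sqrt 3 * t : ℝ) : ℂ) * Complex.I
          = (((Real.sqrt 3 : ℝ) : ℂ) * Complex.I) * t by push_cast; ring,
        show -((Real.sqrt 3 * t : ℝ) : ℂ) * Complex.I
          = -((((Real.sqrt 3 : ℝ) : ℂ) * Complex.I) * t) by push_cast; ring]
  rw [hgf, hcosh, hcos, hsin]
  linear_combination (Complex.exp ((((Real.sqrt 3 : ℝ) : ℂ) * Complex.I) * t)) * hP
    + (Complex.exp (-((((Real.sqrt 3 : ℝ) : ℂ) * Complex.I) * t))) * hQ + h1
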